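/- Let E be a Banach lattice satisfying the property (d) and let A be a norm bounded solid subset of E. Then the following are equivalent: (1) A is almost limited; (2) f_n(x_n) → 0 for every disjoint sequence (x_n) contained in A ∩ E⁺ and every disjoint weak* null sequence (f_n) in E*; (3) f_n(x_n) → 0 for every disjoint sequence (x_n) contained in A ∩ E⁺ and every disjoint weak* null sequence (f_n) consisting of positive functionals in E*. -/

import Mathlib

/-!
(1) ⇒ (2) ⇒ (3) are immediate. If (3) holds but a disjoint weak* null `(fₙ)` does not converge
uniformly on `A`, there are `ε > 0` and `xₖ ∈ A` with `ε ≤ |f_{nₖ}(xₖ)| ≤ gₖ |xₖ|`, where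
`gₖ = |f_{nₖ}|`. The `gₖ` are positive and disjoint, and weak* null by property (d). Along a
subsequence on which `g_{kⱼ}` is small on `u₀ + ⋯ + u_{j-1}` (`uⱼ = |x_{kⱼ}|`), and with
`w = ∑ 2⁻ʲ uⱼ` (completeness), the elements `yⱼ = (uⱼ - 4ʲ ∑_{i<j} uᵢ - 2⁻ʲ w)⁺` are disjoint,
lie in `A` by solidity and satisfy `g_{kⱼ} yⱼ ≥ ε / 2` eventually, contradicting (3).
-/

open Filter Topology Metric Pointwise

/-- The value `|f| x` of the modulus of a continuous linear functional at a positive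
element `x`, given by the Riesz–Kantorovich formula `|f| x = sup { f u : |u| ≤ x }`. -/
noncomputable def absFunctional {E : Type*} [NormedAddCommGroup E] [Lattice E] [IsOrderedAddMonoid E] [HasSolidNorm E] [NormedSpace ℝ E]
    (f : E →L[ℝ] ℝ) (x : E) : ℝ :=
  sSup ((fun u => f u) '' {u : E | |u| ≤ x})

/-- Two functionals `f, g` on a Banach lattice are (lattice) disjoint: `|f| ⊓ |g| = 0`,
expressed via the Riesz–Kantorovich formula for the infimum of the positive functionals
`|f|` and `|g|`. -/
def DualDisjoint {E : Type*} [NormedAddCommGroup E] [Lattice E] [IsOrderedAddMonoid E] [HasSolidNorm E] [NormedSpace ℝ E]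
    (f g : E →L[ℝ] ℝ) : Prop :=
  ∀ x : E, 0 ≤ x → ∀ ε : ℝ, 0 < ε →
    ∃ y : E, 0 ≤ y ∧ y ≤ x ∧ absFunctional f y + absFunctional g (x - y) < ε

/-- A sequence of functionals is disjoint if any two distinct terms are lattice disjoint. -/
def DualDisjointSeq {E : Type*} [NormedAddCommGroup E] [Lattice E] [IsOrderedAddMonoid E] [HasSolidNorm E] [NormedSpace ℝ E]
    (f : ℕ → E →L[ℝ] ℝ) : Prop :=
  ∀ m k, m ≠ k → DualDisjoint (f m) (f k)

/-- A sequence of functionals is weak* null if it converges to `0` pointwise. -/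
def WeakStarNull {E : Type*} [NormedAddCommGroup E] [NormedSpace ℝ E]
    (f : ℕ → E →L[ℝ] ℝ) : Prop :=
  ∀ x : E, Tendsto (fun n => f n x) atTop (𝓝 (0 : ℝ))

/-- The sequence `(|f n|)` of moduli is weak* null (it suffices to test on positive
elements since `|f n|` is additive and every element is a difference of positives). -/
def AbsWeakStarNull {E : Type*} [NormedAddCommGroup E] [Lattice E] [IsOrderedAddMonoid E] [HasSolidNorm E] [NormedSpace ℝ E]
    (f : ℕ → E →L[ℝ] ℝ) : Prop :=
  ∀ x : E, 0 ≤ x → Tendsto (fun n => absFunctional (f n) x) atTop (𝓝 (0 : ℝ))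

/-- A functional is positive if it is nonnegative on the positive cone. -/
def PositiveFunctional {E : Type*} [NormedAddCommGroup E] [Lattice E] [IsOrderedAddMonoid E] [HasSolidNorm E] [NormedSpace ℝ E]
    (f : E →L[ℝ] ℝ) : Prop :=
  ∀ x : E, 0 ≤ x → 0 ≤ f x

/-- A norm bounded set `A` is almost limited if every disjoint weak* null sequence of
functionals converges to `0` uniformly on `A`. -/
def AlmostLimitedSet {E : Type*} [NormedAddCommGroup E] [Lattice E] [IsOrderedAddMonoid E] [HasSolidNorm E] [NormedSpace ℝ E]
    (A : Set E) : Prop :=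
  Bornology.IsBounded A ∧
    ∀ f : ℕ → E →L[ℝ] ℝ, DualDisjointSeq f → WeakStarNull f →
      TendstoUniformlyOn (fun n x => f n x) (fun _ => (0 : ℝ)) atTop A

/-- A norm bounded set `A` in a Banach space is limited if every weak* null sequence of
functionals converges to `0` uniformly on `A`. -/
def LimitedSet {X : Type*} [NormedAddCommGroup X] [NormedSpace ℝ X] (A : Set X) : Prop :=
  Bornology.IsBounded A ∧
    ∀ f : ℕ → X →L[ℝ] ℝ, WeakStarNull f →
      TendstoUniformlyOn (fun n x => f n x) (fun _ => (0 : ℝ)) atTop A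

/-- Property (d): for every disjoint weak* null sequence `(f n)`, `(|f n|)` is weak* null. -/
def PropertyD (E : Type*) [NormedAddCommGroup E] [Lattice E] [IsOrderedAddMonoid E] [HasSolidNorm E] [NormedSpace ℝ E] : Prop :=
  ∀ f : ℕ → E →L[ℝ] ℝ, DualDisjointSeq f → WeakStarNull f → AbsWeakStarNull f

/-- The lattice operations of the dual are weak* sequentially continuous: for every
weak* null sequence `(f n)`, `(|f n|)` is weak* null. -/
def DualLatticeWeakStarSeqCont (E : Type*) [NormedAddCommGroup E] [Lattice E] [IsOrderedAddMonoid E] [HasSolidNorm E]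
    [NormedSpace ℝ E] : Prop :=
  ∀ f : ℕ → E →L[ℝ] ℝ, WeakStarNull f → AbsWeakStarNull f

/-- A sequence in a Banach lattice is disjoint if the moduli of distinct terms meet at 0. -/
def LatticeDisjointSeq {E : Type*} [NormedAddCommGroup E] [Lattice E] [IsOrderedAddMonoid E] [HasSolidNorm E] (x : ℕ → E) : Prop :=
  ∀ m k, m ≠ k → |x m| ⊓ |x k| = 0

/-- A sequence is weakly null if `f (x n) → 0` for every continuous linear functional. -/
def WeaklyNull {E : Type*} [NormedAddCommGroup E] [NormedSpace ℝ E] (x : ℕ → E) : Prop :=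
  ∀ f : E →L[ℝ] ℝ, Tendsto (fun n => f (x n)) atTop (𝓝 (0 : ℝ))

/-- A set is solid if `x ∈ A` and `|y| ≤ |x|` imply `y ∈ A`. -/
def IsSolid {E : Type*} [NormedAddCommGroup E] [Lattice E] [IsOrderedAddMonoid E] [HasSolidNorm E] (A : Set E) : Prop :=
  ∀ x ∈ A, ∀ y : E, |y| ≤ |x| → y ∈ A

/-- The solid hull of a set. -/
def solidHull {E : Type*} [NormedAddCommGroup E] [Lattice E] [IsOrderedAddMonoid E] [HasSolidNorm E] (A : Set E) : Set E :=
  {y | ∃ x ∈ A, |y| ≤ |x|}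

/-- A set is almost order bounded if for every `ε > 0` it is contained in
`[-u, u] + ε B_E` for some positive `u`. -/
def AlmostOrderBounded {E : Type*} [NormedAddCommGroup E] [Lattice E] [IsOrderedAddMonoid E] [HasSolidNorm E] (A : Set E) : Prop :=
  ∀ ε : ℝ, 0 < ε → ∃ u : E, 0 ≤ u ∧ A ⊆ Set.Icc (-u) u + Metric.closedBall (0 : E) ε

/-- σ-Dedekind completeness: every countable nonempty set bounded above has a supremum. -/
def SigmaDedekindComplete (E : Type*) [NormedAddCommGroup E] [Lattice E] [IsOrderedAddMonoid E] [HasSolidNorm E] : Prop :=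
  ∀ s : Set E, s.Countable → s.Nonempty → BddAbove s → ∃ b : E, IsLUB s b

/-- A set is relatively weakly compact if its closure in the weak topology is compact. -/
def RelativelyWeaklyCompact {E : Type*} [NormedAddCommGroup E] [NormedSpace ℝ E]
    (A : Set E) : Prop :=
  IsCompact (closure ((toWeakSpace ℝ E) '' A))

/-- The weak Dunford–Pettis* property: every relatively weakly compact set is almost limited. -/
def WDPStar (E : Type*) [NormedAddCommGroup E] [Lattice E] [IsOrderedAddMonoid E] [HasSolidNorm E] [NormedSpace ℝ E] : Prop :=
  ∀ A : Set E, RelativelyWeaklyCompact A → AlmostLimitedSet A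

/-- The bi-sequence property: for each disjoint weakly null sequence in the positive cone
and each weak* null sequence of positive functionals, `f n (x n) → 0`. -/
def BiSequenceProperty (E : Type*) [NormedAddCommGroup E] [Lattice E] [IsOrderedAddMonoid E] [HasSolidNorm E] [NormedSpace ℝ E] : Prop :=
  ∀ x : ℕ → E, (∀ n, 0 ≤ x n) → LatticeDisjointSeq x → WeaklyNull x →
    ∀ f : ℕ → E →L[ℝ] ℝ, (∀ n, PositiveFunctional (f n)) → WeakStarNull f →
      Tendsto (fun n => f n (x n)) atTop (𝓝 (0 : ℝ))

/-- The dual Schur property: every disjoint weak* null sequence of functionals is norm null. -/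
def DualSchur (E : Type*) [NormedAddCommGroup E] [Lattice E] [IsOrderedAddMonoid E] [HasSolidNorm E] [NormedSpace ℝ E] : Prop :=
  ∀ f : ℕ → E →L[ℝ] ℝ, DualDisjointSeq f → WeakStarNull f →
    Tendsto (fun n => ‖f n‖) atTop (𝓝 (0 : ℝ))

/-- The dual positive Schur property: every weak* null sequence of positive functionals
is norm null. -/
def DualPositiveSchur (E : Type*) [NormedAddCommGroup E] [Lattice E] [IsOrderedAddMonoid E] [HasSolidNorm E] [NormedSpace ℝ E] : Prop :=
  ∀ f : ℕ → E →L[ℝ] ℝ, (∀ n, PositiveFunctional (f n)) → WeakStarNull f →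
    Tendsto (fun n => ‖f n‖) atTop (𝓝 (0 : ℝ))

/-- The norm of a Banach lattice is order continuous: every net decreasing to `0`
converges to `0` in norm. -/
def OrderContinuousNorm (E : Type*) [NormedAddCommGroup E] [Lattice E] [IsOrderedAddMonoid E] [HasSolidNorm E] : Prop :=
  ∀ {ι : Type*} [Preorder ι] [IsDirected ι (· ≤ ·)] [Nonempty ι] (x : ι → E),
    Antitone x → IsGLB (Set.range x) 0 → Tendsto (fun i => ‖x i‖) atTop (𝓝 (0 : ℝ))

/-- The norm of the dual Banach lattice is order continuous: every net of functionals
decreasing to `0` (in the dual order, i.e., pointwise on the positive cone, with greatest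
lower bound `0`) converges to `0` in norm. -/
def DualOrderContinuousNorm (E : Type*) [NormedAddCommGroup E] [Lattice E] [IsOrderedAddMonoid E] [HasSolidNorm E]
    [NormedSpace ℝ E] : Prop :=
  ∀ {ι : Type*} [Preorder ι] [IsDirected ι (· ≤ ·)] [Nonempty ι] (f : ι → E →L[ℝ] ℝ),
    (∀ i j, i ≤ j → ∀ x : E, 0 ≤ x → f j x ≤ f i x) →
    (∀ i, PositiveFunctional (f i)) →
    (∀ g : E →L[ℝ] ℝ, (∀ i, ∀ x : E, 0 ≤ x → g x ≤ f i x) → ∀ x : E, 0 ≤ x → g x ≤ 0) →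
    Tendsto (fun i => ‖f i‖) atTop (𝓝 (0 : ℝ))

/-- A norm bounded set `A` is L-weakly compact if every disjoint sequence in its solid
hull is norm null. -/
def LWeaklyCompactSet {E : Type*} [NormedAddCommGroup E] [Lattice E] [IsOrderedAddMonoid E] [HasSolidNorm E] (A : Set E) : Prop :=
  Bornology.IsBounded A ∧
    ∀ y : ℕ → E, (∀ n, y n ∈ solidHull A) → LatticeDisjointSeq y →
      Tendsto (fun n => ‖y n‖) atTop (𝓝 (0 : ℝ))

/-- An atom of a Banach lattice. -/
def IsLatticeAtom {E : Type*} [NormedAddCommGroup E] [Lattice E] [IsOrderedAddMonoid E] [HasSolidNorm E] (a : E) : Prop :=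
  0 < a ∧ ∀ x y : E, 0 ≤ x → x ≤ a → 0 ≤ y → y ≤ a → x ⊓ y = 0 → x = 0 ∨ y = 0

/-- A Banach lattice is discrete (atomic) if the band generated by its atoms is the whole
lattice; equivalently, the only element disjoint from all atoms is `0`. -/
def DiscreteBanachLattice (E : Type*) [NormedAddCommGroup E] [Lattice E] [IsOrderedAddMonoid E] [HasSolidNorm E] : Prop :=
  ∀ x : E, (∀ a : E, IsLatticeAtom a → |x| ⊓ a = 0) → x = 0

/-- A linear operator between Banach lattices is order bounded if it maps order intervals
into order intervals. -/
def OrderBoundedOperator {E F : Type*} [NormedAddCommGroup E] [Lattice E] [IsOrderedAddMonoid E] [HasSolidNorm E] [NormedSpace ℝ E]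
    [NormedAddCommGroup F] [Lattice F] [IsOrderedAddMonoid F] [HasSolidNorm F] [NormedSpace ℝ F] (T : E →ₗ[ℝ] F) : Prop :=
  ∀ a b : E, ∃ c d : F, T '' Set.Icc a b ⊆ Set.Icc c d

lemma nonneg_of_two_pow_nsmul_nonneg {α : Type*} [Lattice α] [AddCommGroup α] [IsOrderedAddMonoid α]
    {a : α} : ∀ n : ℕ, 0 ≤ 2 ^ n • a → 0 ≤ a
  | 0, h => by simpa using h
  | n + 1, h => nsmul_two_semiclosed <| nonneg_of_two_pow_nsmul_nonneg n <| by
      rwa [← mul_nsmul', ← pow_succ]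

section OrderedModule

variable {E : Type*} [NormedAddCommGroup E] [Lattice E] [IsOrderedAddMonoid E] [HasSolidNorm E]
  [NormedSpace ℝ E]

/-- The dyadic multiples `⌊c 2ⁿ⌋₊ / 2ⁿ • x` are positive and the positive cone is closed. -/
lemma HasSolidNorm.smul_nonneg {c : ℝ} (hc : 0 ≤ c) {x : E} (hx : 0 ≤ x) : 0 ≤ c • x := by
  have hdyadic : ∀ n : ℕ, 0 ≤ ((⌊c * 2 ^ n⌋₊ : ℝ) / 2 ^ n) • x := fun n =>
    nonneg_of_two_pow_nsmul_nonneg n <| by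
      rw [← Nat.cast_smul_eq_nsmul ℝ, smul_smul, Nat.cast_pow, Nat.cast_ofNat,
        mul_div_cancel₀ _ (by positivity), Nat.cast_smul_eq_nsmul]
      exact nsmul_nonneg hx _
  have hlim : Tendsto (fun n : ℕ => (⌊c * 2 ^ n⌋₊ : ℝ) / 2 ^ n) atTop (𝓝 c) :=
    (tendsto_nat_floor_mul_div_atTop hc).comp (tendsto_pow_atTop_atTop_of_one_lt one_lt_two)
  exact isClosed_nonneg.mem_of_tendsto (hlim.smul_const x) (Eventually.of_forall hdyadic)

instance HasSolidNorm.isOrderedModule : IsOrderedModule ℝ E :=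
  .of_smul_nonneg fun _ hc _ hx => HasSolidNorm.smul_nonneg hc hx

end OrderedModule

lemma posPart_smul_of_pos {E : Type*} [AddCommGroup E] [Lattice E] [Module ℝ E]
    [IsOrderedModule ℝ E] {c : ℝ} (hc : 0 < c) (a : E) : (c • a)⁺ = c • a⁺ := by
  have h : c • (a ⊔ 0) = c • a ⊔ c • 0 := (OrderIso.smulRight hc).map_sup a 0
  rw [posPart_def, posPart_def, h, smul_zero]

lemma exists_add_eq_of_abs_le_add {α : Type*} [Lattice α] [AddCommGroup α] [IsOrderedAddMonoid α]
    {x y w : α} (hx : 0 ≤ x) (hy : 0 ≤ y) (hw : |w| ≤ x + y) :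
    ∃ u v : α, w = u + v ∧ |u| ≤ x ∧ |v| ≤ y := by
  obtain ⟨hw_le, hw_ge⟩ := abs_le'.1 hw
  refine ⟨w ⊓ x ⊔ -x, w - (w ⊓ x ⊔ -x), by abel, ?_, ?_⟩
  · rw [abs_le', neg_sup, neg_neg]
    exact ⟨sup_le inf_le_right (neg_le_self hx), inf_le_right⟩
  · have hv : w - (w ⊓ x ⊔ -x) = (0 ⊔ (w - x)) ⊓ (w + x) := by
      rw [sub_sup, sub_inf, sub_self, sub_neg_eq_add]
    rw [hv, abs_le', neg_inf]
    refine ⟨inf_le_left.trans (sup_le hy ?_), sup_le ?_ ?_⟩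
    · rwa [sub_le_iff_le_add']
    · exact (neg_nonpos.2 le_sup_left).trans hy
    · rw [neg_add', sub_le_iff_le_add, add_comm]
      exact hw_ge

lemma apply_le_norm_mul_of_abs_le {E : Type*} [NormedAddCommGroup E] [Lattice E] [HasSolidNorm E]
    [NormedSpace ℝ E] (f : E →L[ℝ] ℝ) {u x : E} (hu : |u| ≤ x) : f u ≤ ‖f‖ * ‖x‖ :=
  calc f u ≤ ‖f‖ * ‖u‖ := (le_abs_self _).trans (f.le_opNorm u)
    _ ≤ ‖f‖ * ‖x‖ := by
      gcongr
      exact norm_le_norm_of_abs_le_abs (hu.trans (le_abs_self x))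

section Modulus

variable {E : Type*} [NormedAddCommGroup E] [Lattice E] [IsOrderedAddMonoid E] [HasSolidNorm E]
  [NormedSpace ℝ E] (f : E →L[ℝ] ℝ) {x y : E}

lemma le_absFunctional {v : E} (hv : |v| ≤ x) : f v ≤ absFunctional f x :=
  le_csSup ⟨‖f‖ * ‖x‖, by rintro _ ⟨u, hu, rfl⟩; exact apply_le_norm_mul_of_abs_le f hu⟩
    ⟨v, hv, rfl⟩

lemma absFunctional_le {c : ℝ} (hx : 0 ≤ x) (h : ∀ v, |v| ≤ x → f v ≤ c) :
    absFunctional f x ≤ c :=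
  csSup_le ⟨f 0, 0, by simpa using hx, rfl⟩ (by rintro _ ⟨v, hv, rfl⟩; exact h v hv)

lemma absFunctional_le_norm_mul (hx : 0 ≤ x) : absFunctional f x ≤ ‖f‖ * ‖x‖ :=
  absFunctional_le f hx fun _ => apply_le_norm_mul_of_abs_le f

lemma absFunctional_nonneg (hx : 0 ≤ x) : 0 ≤ absFunctional f x := by
  simpa using le_absFunctional f (v := 0) (by simpa using hx)

lemma absFunctional_zero : absFunctional f 0 = 0 :=
  le_antisymm (by simpa using absFunctional_le_norm_mul f le_rfl) (absFunctional_nonneg f le_rfl)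

lemma abs_apply_le_absFunctional (v : E) : |f v| ≤ absFunctional f |v| :=
  abs_le.2 ⟨neg_le.1 (by simpa using le_absFunctional f (abs_neg v).le),
    le_absFunctional f le_rfl⟩

/-- The inequality `≤` is the Riesz decomposition property. -/
lemma absFunctional_add (hx : 0 ≤ x) (hy : 0 ≤ y) :
    absFunctional f (x + y) = absFunctional f x + absFunctional f y := by
  refine le_antisymm (absFunctional_le f (add_nonneg hx hy) fun w hw => ?_) ?_
  · obtain ⟨u, v, rfl, hu, hv⟩ := exists_add_eq_of_abs_le_add hx hy hw
    rw [map_add]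
    exact add_le_add (le_absFunctional f hu) (le_absFunctional f hv)
  · rw [← le_sub_iff_add_le]
    refine absFunctional_le f hx fun u hu => le_sub_comm.1 ?_
    refine absFunctional_le f hy fun v hv => le_sub_iff_add_le'.2 ?_
    rw [← map_add]
    exact le_absFunctional f ((abs_add_le u v).trans (add_le_add hu hv))

lemma absFunctional_mono (hx : 0 ≤ x) (hxy : x ≤ y) : absFunctional f x ≤ absFunctional f y := by
  have h := absFunctional_add f hx (sub_nonneg.2 hxy)
  rw [add_sub_cancel] at h
  linarith [absFunctional_nonneg f (sub_nonneg.2 hxy)]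

lemma absFunctional_sub_eq {a b c d : E} (ha : 0 ≤ a) (hb : 0 ≤ b) (hc : 0 ≤ c) (hd : 0 ≤ d)
    (h : a - b = c - d) :
    absFunctional f a - absFunctional f b = absFunctional f c - absFunctional f d := by
  have h' : a + d = c + b := by rw [← sub_eq_sub_iff_add_eq_add]; exact h
  have := congrArg (absFunctional f) h'
  rw [absFunctional_add f ha hd, absFunctional_add f hc hb] at this
  linarith

lemma absFunctional_posPart_sub_negPart_add (x y : E) :
    absFunctional f (x + y)⁺ - absFunctional f (x + y)⁻ =
      (absFunctional f x⁺ - absFunctional f x⁻) + (absFunctional f y⁺ - absFunctional f y⁻) := by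
  have h : (x + y)⁺ - (x + y)⁻ = (x⁺ + y⁺) - (x⁻ + y⁻) := by
    rw [posPart_sub_negPart, add_sub_add_comm, posPart_sub_negPart, posPart_sub_negPart]
  rw [absFunctional_sub_eq f (posPart_nonneg _) (negPart_nonneg _)
      (add_nonneg (posPart_nonneg _) (posPart_nonneg _))
      (add_nonneg (negPart_nonneg _) (negPart_nonneg _)) h,
    absFunctional_add f (posPart_nonneg _) (posPart_nonneg _),
    absFunctional_add f (negPart_nonneg _) (negPart_nonneg _)]
  ring

lemma abs_absFunctional_posPart_sub_negPart_le (x : E) :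
    |absFunctional f x⁺ - absFunctional f x⁻| ≤ ‖f‖ * ‖x‖ := by
  have hsum : absFunctional f x⁺ + absFunctional f x⁻ ≤ ‖f‖ * ‖x‖ := by
    rw [← absFunctional_add f (posPart_nonneg _) (negPart_nonneg _), posPart_add_negPart,
      ← norm_abs_eq_norm x]
    exact absFunctional_le_norm_mul f (abs_nonneg x)
  rw [abs_le]
  constructor <;>
    linarith [absFunctional_nonneg f (posPart_nonneg x), absFunctional_nonneg f (negPart_nonneg x)]

/-- The modulus `|f|` in the dual Banach lattice, extended linearly from its values
`absFunctional f` on the positive cone. -/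
noncomputable def modulus : E →L[ℝ] ℝ :=
  let g : E →+ ℝ := AddMonoidHom.mk' (fun x => absFunctional f x⁺ - absFunctional f x⁻)
    (absFunctional_posPart_sub_negPart_add f)
  g.toRealLinearMap (AddMonoidHomClass.continuous_of_bound g ‖f‖
    (abs_absFunctional_posPart_sub_negPart_le f))

lemma modulus_apply (x : E) : modulus f x = absFunctional f x⁺ - absFunctional f x⁻ := rfl

lemma modulus_apply_of_nonneg (hx : 0 ≤ x) : modulus f x = absFunctional f x := by
  rw [modulus_apply, posPart_eq_self.2 hx, negPart_eq_zero.2 hx, absFunctional_zero, sub_zero]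

lemma positiveFunctional_modulus : PositiveFunctional (modulus f) := fun _ hx => by
  rw [modulus_apply_of_nonneg f hx]
  exact absFunctional_nonneg f hx

lemma abs_apply_le_modulus_abs (v : E) : |f v| ≤ modulus f |v| := by
  rw [modulus_apply_of_nonneg f (abs_nonneg v)]
  exact abs_apply_le_absFunctional f v

lemma absFunctional_modulus (hy : 0 ≤ y) : absFunctional (modulus f) y = absFunctional f y := by
  refine le_antisymm (absFunctional_le _ hy fun u hu => ?_) ?_
  · rw [modulus_apply]
    have hu' : u⁺ ≤ y := (sup_le (le_abs_self u) (abs_nonneg u)).trans hu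
    linarith [absFunctional_mono f (posPart_nonneg u) hu',
      absFunctional_nonneg f (negPart_nonneg u)]
  · rw [← modulus_apply_of_nonneg f hy]
    exact le_absFunctional _ (abs_of_nonneg hy).le

end Modulus

lemma WeakStarNull.exists_strictMono_apply_sum_lt {E : Type*} [NormedAddCommGroup E]
    [NormedSpace ℝ E] {g : ℕ → E →L[ℝ] ℝ} (hg : WeakStarNull g)
    (z : ℕ → E) {δ : ℕ → ℝ} (hδ : ∀ j, 0 < δ j) :
    ∃ m : ℕ → ℕ, StrictMono m ∧ ∀ j, g (m j) (∑ i ∈ Finset.range j, z (m i)) < δ j := by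
  have hnext : ∀ j k (S : E), ∃ k', k < k' ∧ g k' S < δ j := fun j k S =>
    (((hg S).eventually (gt_mem_nhds (hδ j))).and (eventually_gt_atTop k)).exists.imp
      fun _ h => h.symm
  choose next hnext_gt hnext_lt using hnext
  -- `F j = (m j, ∑ i < j, z (m i))`
  let F : ℕ → ℕ × E := fun j => Nat.rec (0, 0)
    (fun j p => (next (j + 1) p.1 (p.2 + z p.1), p.2 + z p.1)) j
  have hsum : ∀ j, (F j).2 = ∑ i ∈ Finset.range j, z (F i).1 := by
    intro j
    induction j with
    | zero => rfl
    | succ j ih => rw [Finset.sum_range_succ, ← ih]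
  refine ⟨fun j => (F j).1, strictMono_nat_of_lt_succ fun j => hnext_gt _ _ _, fun j => ?_⟩
  rw [← hsum]
  cases j with
  | zero => exact (map_zero (g (F 0).1)).trans_lt (hδ 0)
  | succ j => exact hnext_lt _ _ _

section DualSequences

variable {E : Type*} [NormedAddCommGroup E] [Lattice E] [IsOrderedAddMonoid E] [HasSolidNorm E]
  [NormedSpace ℝ E]

lemma DualDisjoint.modulus {f g : E →L[ℝ] ℝ} (h : DualDisjoint f g) :
    DualDisjoint (modulus f) (modulus g) := fun x hx ε hε => by
  obtain ⟨y, hy, hyx, hlt⟩ := h x hx ε hε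
  refine ⟨y, hy, hyx, ?_⟩
  rwa [absFunctional_modulus f hy, absFunctional_modulus g (sub_nonneg.2 hyx)]

lemma AbsWeakStarNull.weakStarNull_modulus {f : ℕ → E →L[ℝ] ℝ} (h : AbsWeakStarNull f) :
    WeakStarNull fun n => modulus (f n) := fun x => by
  simpa [modulus_apply] using (h _ (posPart_nonneg x)).sub (h _ (negPart_nonneg x))

end DualSequences

lemma PositiveFunctional.mono {E : Type*} [NormedAddCommGroup E] [Lattice E] [IsOrderedAddMonoid E]
    [HasSolidNorm E] [NormedSpace ℝ E] {f : E →L[ℝ] ℝ} (hf : PositiveFunctional f) {x y : E}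
    (h : x ≤ y) : f x ≤ f y := by
  simpa using hf _ (sub_nonneg.2 h)

section Disjointification

variable {E : Type*} [AddCommGroup E] [Lattice E] [Module ℝ E]

noncomputable def disjointification (u : ℕ → E) (w : E) (j : ℕ) : E :=
  (u j - (4 : ℝ) ^ j • ∑ i ∈ Finset.range j, u i - (2 : ℝ)⁻¹ ^ j • w)⁺

variable {u : ℕ → E} {w : E}

lemma disjointification_nonneg (j : ℕ) : 0 ≤ disjointification u w j := posPart_nonneg _

variable [IsOrderedAddMonoid E] [IsOrderedModule ℝ E]

lemma disjointification_le (hu : ∀ n, 0 ≤ u n) (hw : 0 ≤ w) (j : ℕ) :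
    disjointification u w j ≤ u j := by
  refine sup_le ?_ (hu j)
  rw [sub_sub]
  exact sub_le_self _ (add_nonneg (smul_nonneg (by positivity) (Finset.sum_nonneg fun i _ => hu i))
    (smul_nonneg (by positivity) hw))

/-- With `P = 4ᵏ uⱼ - 2ᵏ w`, the `j`-th term is below `P⁺` (as `2ʲ w` dominates `uⱼ`) and the
`k`-th one below `P⁻` (as `4ᵏ uⱼ` is subtracted from `uₖ ≤ 2ᵏ w`). -/
lemma disjointification_inf_eq_zero (hu : ∀ n, 0 ≤ u n) (hw : ∀ n, u n ≤ (2 : ℝ) ^ n • w)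
    {j k : ℕ} (hjk : j < k) : disjointification u w j ⊓ disjointification u w k = 0 := by
  have hw0 : 0 ≤ w := by simpa using (hu 0).trans (hw 0)
  have hsum : ∀ n, 0 ≤ ∑ i ∈ Finset.range n, u i := fun n => Finset.sum_nonneg fun i _ => hu i
  set P : E := (4 : ℝ) ^ k • u j - (2 : ℝ) ^ k • w
  have hcoef : (2 : ℝ) ^ k ≤ 4 ^ k * 2⁻¹ ^ j := by
    rw [inv_pow, le_mul_inv_iff₀ (by positivity)]
    calc (2 : ℝ) ^ k * 2 ^ j ≤ 2 ^ k * 2 ^ k := by gcongr; norm_num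
      _ = 4 ^ k := by rw [← mul_pow]; norm_num
  have hj : disjointification u w j ≤ P⁺ :=
    calc disjointification u w j ≤ (u j - (2 : ℝ)⁻¹ ^ j • w)⁺ :=
          posPart_mono (sub_le_sub_right (sub_le_self _ (smul_nonneg (by positivity) (hsum j))) _)
      _ ≤ (4 : ℝ) ^ k • (u j - (2 : ℝ)⁻¹ ^ j • w)⁺ :=
          le_smul_of_one_le_left (posPart_nonneg _) (one_le_pow₀ (by norm_num))
      _ = ((4 : ℝ) ^ k • u j - ((4 : ℝ) ^ k * 2⁻¹ ^ j) • w)⁺ := by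
          rw [← posPart_smul_of_pos (by positivity), smul_sub, smul_smul]
      _ ≤ P⁺ := posPart_mono (sub_le_sub_left (smul_le_smul_of_nonneg_right hcoef hw0) _)
  have hk : disjointification u w k ≤ P⁻ :=
    calc disjointification u w k ≤ (u k - (4 : ℝ) ^ k • u j)⁺ := by
          refine posPart_mono ((sub_le_self _ (smul_nonneg (by positivity) hw0)).trans ?_)
          exact sub_le_sub_left (smul_le_smul_of_nonneg_left
            (Finset.single_le_sum (fun i _ => hu i) (Finset.mem_range.2 hjk)) (by positivity)) _
      _ ≤ (-P)⁺ := posPart_mono (by rw [neg_sub]; exact sub_le_sub_right (hw k) _)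
      _ = P⁻ := posPart_neg P
  exact le_antisymm ((inf_le_inf hj hk).trans (posPart_inf_negPart_eq_zero P).le)
    (le_inf (disjointification_nonneg j) (disjointification_nonneg k))

end Disjointification

section NormedDisjointification

variable {E : Type*} [NormedAddCommGroup E] [Lattice E] [IsOrderedAddMonoid E] [HasSolidNorm E]
  [NormedSpace ℝ E]

lemma latticeDisjointSeq_disjointification {u : ℕ → E} {w : E} (hu : ∀ n, 0 ≤ u n)
    (hw : ∀ n, u n ≤ (2 : ℝ) ^ n • w) : LatticeDisjointSeq (disjointification u w) := by
  intro j k hjk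
  rw [abs_of_nonneg (disjointification_nonneg j), abs_of_nonneg (disjointification_nonneg k)]
  rcases hjk.lt_or_gt with h | h
  · exact disjointification_inf_eq_zero hu hw h
  · rw [inf_comm]
    exact disjointification_inf_eq_zero hu hw h

lemma exists_forall_le_two_pow_smul [CompleteSpace E] {u : ℕ → E} (hu : ∀ n, 0 ≤ u n)
    (hb : Bornology.IsBounded (Set.range u)) : ∃ w : E, ∀ n, u n ≤ (2 : ℝ) ^ n • w := by
  obtain ⟨M, hM⟩ := isBounded_iff_forall_norm_le.1 hb
  have hsummable : Summable fun n => (2 : ℝ)⁻¹ ^ n • u n := by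
    refine .of_norm_bounded
      ((summable_geometric_of_lt_one (r := (2 : ℝ)⁻¹) (by norm_num) (by norm_num)).mul_right M)
      fun n => ?_
    rw [norm_smul, norm_pow, norm_inv, Real.norm_ofNat]
    gcongr
    exact hM _ ⟨n, rfl⟩
  refine ⟨∑' n, (2 : ℝ)⁻¹ ^ n • u n, fun n => ?_⟩
  have h := smul_le_smul_of_nonneg_left
    (hsummable.le_tsum n fun i _ => smul_nonneg (by positivity) (hu i))
    (by positivity : (0 : ℝ) ≤ 2 ^ n)
  rwa [smul_smul, ← mul_pow, mul_inv_cancel₀ two_ne_zero, one_pow, one_smul] at h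

end NormedDisjointification

theorem exists_latticeDisjointSeq_le_of_weakStarNull {E : Type*} [NormedAddCommGroup E] [Lattice E]
    [IsOrderedAddMonoid E] [HasSolidNorm E] [NormedSpace ℝ E] [CompleteSpace E]
    {g : ℕ → E →L[ℝ] ℝ} (hgpos : ∀ n, PositiveFunctional (g n)) (hg : WeakStarNull g)
    {u : ℕ → E} (hu : ∀ n, 0 ≤ u n) (hb : Bornology.IsBounded (Set.range u)) {ε : ℝ} (hε : 0 < ε)
    (hgu : ∀ n, ε ≤ g n (u n)) :
    ∃ m : ℕ → ℕ, StrictMono m ∧ ∃ y : ℕ → E, (∀ j, 0 ≤ y j ∧ y j ≤ u (m j)) ∧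
      LatticeDisjointSeq y ∧ ∀ᶠ j in atTop, ε / 2 ≤ g (m j) (y j) := by
  obtain ⟨m, hm, hsmall⟩ := hg.exists_strictMono_apply_sum_lt u
    (δ := fun j => ε / 4 / 4 ^ j) fun j => by positivity
  obtain ⟨w, hw⟩ := exists_forall_le_two_pow_smul (fun n => hu (m n))
    (hb.subset (Set.range_comp_subset_range m u))
  have hw0 : 0 ≤ w := by simpa using (hu (m 0)).trans (hw 0)
  refine ⟨m, hm, disjointification (fun n => u (m n)) w,
    fun j => ⟨disjointification_nonneg j, disjointification_le (fun n => hu (m n)) hw0 j⟩,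
    latticeDisjointSeq_disjointification (fun n => hu (m n)) hw, ?_⟩
  have hgw : ∀ᶠ j in atTop, g (m j) w ≤ ε / 4 :=
    ((hg w).comp hm.tendsto_atTop).eventually (ge_mem_nhds (by positivity))
  filter_upwards [hgw] with j hj
  have hsum : (4 : ℝ) ^ j * g (m j) (∑ i ∈ Finset.range j, u (m i)) ≤ ε / 4 := by
    have := (mul_lt_mul_of_pos_left (hsmall j) (by positivity : (0 : ℝ) < 4 ^ j)).le
    rwa [mul_div_cancel₀ _ (by positivity)] at this
  have hw' : (2 : ℝ)⁻¹ ^ j * g (m j) w ≤ ε / 4 :=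
    (mul_le_of_le_one_left (hgpos _ w hw0) (pow_le_one₀ (by norm_num) (by norm_num))).trans hj
  have hy := (hgpos (m j)).mono (le_posPart
    (u (m j) - (4 : ℝ) ^ j • ∑ i ∈ Finset.range j, u (m i) - (2 : ℝ)⁻¹ ^ j • w))
  rw [map_sub, map_sub, map_smul, map_smul, smul_eq_mul, smul_eq_mul] at hy
  change _ ≤ g (m j) (disjointification (fun n => u (m n)) w j) at hy
  linarith [hgu (m j)]

lemma exists_le_abs_of_not_tendstoUniformlyOn {α : Type*} {F : ℕ → α → ℝ} {s : Set α}
    (h : ¬TendstoUniformlyOn F (fun _ => 0) atTop s) :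
    ∃ ε > 0, ∃ φ : ℕ → ℕ, StrictMono φ ∧ ∃ x : ℕ → α, (∀ k, x k ∈ s) ∧
      ∀ k, ε ≤ |F (φ k) (x k)| := by
  rw [Metric.tendstoUniformlyOn_iff] at h
  push Not at h
  obtain ⟨ε, hε, hfreq⟩ := h
  obtain ⟨φ, hφ, hx⟩ := extraction_of_frequently_atTop hfreq
  choose x hxs hx using hx
  exact ⟨ε, hε, φ, hφ, x, hxs, fun k => by simpa [Real.dist_eq] using hx k⟩

lemma TendstoUniformlyOn.tendsto_apply_of_forall_mem {ι α β : Type*} [PseudoMetricSpace β]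
    {F : ι → α → β} {c : β} {p : Filter ι} {s : Set α}
    (h : TendstoUniformlyOn F (fun _ => c) p s) {x : ι → α} (hx : ∀ i, x i ∈ s) :
    Tendsto (fun i => F i (x i)) p (𝓝 c) :=
  Metric.tendsto_nhds.2 fun ε hε =>
    (Metric.tendstoUniformlyOn_iff.1 h ε hε).mono fun i hi => by
      rw [dist_comm]
      exact hi _ (hx i)

/-- For a Banach lattice `E` with property (d) and a norm bounded solid set
`A ⊆ E`, TFAE: (1) `A` is almost limited; (2) `f n (x n) → 0` for every disjoint sequence
`(x n)` in `A ∩ E⁺` and every disjoint weak* null `(f n)` in `E*`; (3) the same with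
`(f n)` positive. -/
theorem statement11 {E : Type*} [NormedAddCommGroup E] [Lattice E] [IsOrderedAddMonoid E] [HasSolidNorm E] [NormedSpace ℝ E]
    [CompleteSpace E] (hd : PropertyD E)
    (A : Set E) (hAb : Bornology.IsBounded A) (hAs : IsSolid A) :
    List.TFAE
      [AlmostLimitedSet A,
       ∀ x : ℕ → E, (∀ n, x n ∈ A) → (∀ n, 0 ≤ x n) → LatticeDisjointSeq x →
         ∀ f : ℕ → E →L[ℝ] ℝ, DualDisjointSeq f → WeakStarNull f →
           Filter.Tendsto (fun n => f n (x n)) Filter.atTop (nhds (0 : ℝ)),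
       ∀ x : ℕ → E, (∀ n, x n ∈ A) → (∀ n, 0 ≤ x n) → LatticeDisjointSeq x →
         ∀ f : ℕ → E →L[ℝ] ℝ, (∀ n, PositiveFunctional (f n)) → DualDisjointSeq f →
           WeakStarNull f →
             Filter.Tendsto (fun n => f n (x n)) Filter.atTop (nhds (0 : ℝ))] := by
  tfae_have 1 → 2 := fun h1 x hxA _ _ f hfd hfn =>
    (h1.2 f hfd hfn).tendsto_apply_of_forall_mem hxA
  tfae_have 2 → 3 := fun h2 x hxA hx0 hxd f _ => h2 x hxA hx0 hxd f
  tfae_have 3 → 1 := by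
    intro h3
    refine ⟨hAb, fun f hfd hfn => by_contra fun hunif => ?_⟩
    have hmod := (hd f hfd hfn).weakStarNull_modulus
    obtain ⟨ε, hε, φ, hφ, x, hxA, hfx⟩ := exists_le_abs_of_not_tendstoUniformlyOn hunif
    have habsA : ∀ k, |x k| ∈ A := fun k => hAs _ (hxA k) _ (abs_abs _).le
    obtain ⟨m, hm, y, hy, hyd, hgy⟩ := exists_latticeDisjointSeq_le_of_weakStarNull
      (g := fun k => modulus (f (φ k))) (fun k => positiveFunctional_modulus _)
      (fun z => (hmod z).comp hφ.tendsto_atTop)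
      (fun k => abs_nonneg (x k)) (hAb.subset (Set.range_subset_iff.2 habsA)) hε
      fun k => (hfx k).trans (abs_apply_le_modulus_abs _ _)
    have hyA : ∀ j, y j ∈ A := fun j => hAs _ (habsA (m j)) _ <| by
      rw [abs_of_nonneg (hy j).1, abs_abs]
      exact (hy j).2
    have hlim := h3 y hyA (fun j => (hy j).1) hyd (fun j => modulus (f (φ (m j))))
      (fun j => positiveFunctional_modulus _)
      (fun a b hab => (hfd _ _ ((hφ.comp hm).injective.ne hab)).modulus)
      (fun z => (hmod z).comp (hφ.comp hm).tendsto_atTop)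
    obtain ⟨j, hsmall, hlarge⟩ :=
      ((hlim.eventually (gt_mem_nhds (half_pos hε))).and hgy).exists
    exact hsmall.not_ge hlarge
  tfae_finish
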